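/- With Ŝ_q[n,k] the q-Stirling numbers of the second kind defined by Ŝ_q[n,k] = Ŝ_q[n-1,k-1] + [k]_q·Ŝ_q[n-1,k] (initial conditions Ŝ_q[n,0]=Ŝ_q[0,n]=δ_{n,0}), the inverse Carlitz identity holds: (q−1)^{n−k}·Ŝ_q[n,k] = ∑_{j=k}^{n} (−1)^{n−j}·C(n,j)·[j choose k]_q, where [j choose k]_q is the Gaussian binomial coefficient. -/

import Mathlib

open Finset

/-- The q-integer `[k]_q = 1 + q + ... + q^(k-1)`. -/
def qint {K : Type*} [CommRing K] (q : K) (k : ℕ) : K := ∑ i ∈ Finset.range k, q ^ i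

/-- The q-Stirling numbers of the second kind. -/
def Shat {K : Type*} [CommRing K] (q : K) : ℕ → ℕ → K
  | 0, 0 => 1
  | 0, _ + 1 => 0
  | _ + 1, 0 => 0
  | n + 1, k + 1 => Shat q n k + qint q (k + 1) * Shat q n (k + 1)

/-- The Gaussian binomial coefficient. -/
def gauss {K : Type*} [CommRing K] (q : K) : ℕ → ℕ → K
  | 0, 0 => 1
  | 0, _ + 1 => 0
  | _ + 1, 0 => 1
  | n + 1, k + 1 => gauss q n k + q ^ (k + 1) * gauss q n (k + 1)

/-!
The right-hand side is the `n`-th forward difference at `0` of `j ↦ [j choose k]_q`. The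
q-Pascal rule gives `Δ [· choose k+1]_q = [· choose k]_q + (q^(k+1) - 1) [· choose k+1]_q`, so
these iterated differences obey the recurrence of `Ŝ_q` scaled by `(q - 1)^(n - k)`, because
`q^(k+1) - 1 = (q - 1) [k+1]_q`.
-/

open fwdDiff

theorem fwdDiff_iter_eq_sum_Icc_of_eq_zero_of_lt {R : Type*} [Ring R] {f : ℕ → R} {k : ℕ}
    (hf : ∀ j < k, f j = 0) (n : ℕ) :
    Δ_[1] ^[n] f 0 = ∑ j ∈ Icc k n, (-1 : R) ^ (n - j) * (n.choose j : R) * f j := by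
  rw [fwdDiff_iter_eq_sum_shift]
  simp only [zero_add, smul_eq_mul, mul_one, zsmul_eq_mul, Int.cast_mul, Int.cast_pow,
    Int.cast_neg, Int.cast_one, Int.cast_natCast]
  refine (sum_subset (fun j hj ↦ ?_) fun j hjn hjk ↦ ?_).symm
  · simp only [mem_Icc, mem_range] at hj ⊢
    omega
  · simp only [mem_Icc, mem_range, not_and, not_le] at hjn hjk
    rw [hf j (by omega), mul_zero]

theorem fwdDiff_iter_const_eq_zero {M G : Type*} [AddCommMonoid M] [AddCommGroup G] (h : M)
    (c : G) {n : ℕ} (hn : n ≠ 0) : Δ_[h] ^[n] (fun _ : M ↦ c) = 0 := by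
  obtain ⟨n, rfl⟩ := Nat.exists_eq_succ_of_ne_zero hn
  rw [Function.iterate_succ_apply, fwdDiff_const]
  exact Function.iterate_fixed (fwdDiff_const h 0) n

section

variable {K : Type*} [CommRing K] (q : K)

theorem sub_one_mul_qint (k : ℕ) : (q - 1) * qint q k = q ^ k - 1 := by
  rw [qint, mul_comm, geom_sum_mul]

theorem Shat_eq_zero_of_lt {n k : ℕ} (h : n < k) : Shat q n k = 0 := by
  induction n generalizing k with
  | zero => obtain ⟨k, rfl⟩ := Nat.exists_eq_succ_of_ne_zero h.ne'; rfl
  | succ n ih =>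
    obtain ⟨k, rfl⟩ := Nat.exists_eq_succ_of_ne_zero (Nat.ne_zero_of_lt h)
    rw [Shat, ih (by omega), ih (by omega), mul_zero, add_zero]

theorem gauss_zero_right (n : ℕ) : gauss q n 0 = 1 := by
  cases n <;> rfl

theorem gauss_eq_zero_of_lt {n k : ℕ} (h : n < k) : gauss q n k = 0 := by
  induction n generalizing k with
  | zero => obtain ⟨k, rfl⟩ := Nat.exists_eq_succ_of_ne_zero h.ne'; rfl
  | succ n ih =>
    obtain ⟨k, rfl⟩ := Nat.exists_eq_succ_of_ne_zero (Nat.ne_zero_of_lt h)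
    rw [gauss, ih (by omega), ih (by omega), mul_zero, add_zero]

theorem fwdDiff_gauss_succ (k : ℕ) :
    Δ_[1] (gauss q · (k + 1)) = (gauss q · k) + (q ^ (k + 1) - 1) • (gauss q · (k + 1)) := by
  ext j
  simp only [fwdDiff, gauss, Pi.add_apply, Pi.smul_apply, smul_eq_mul]
  ring

theorem fwdDiff_iter_gauss_zero_right {n : ℕ} (hn : n ≠ 0) :
    Δ_[1] ^[n] (gauss q · 0) 0 = 0 := by
  simp only [gauss_zero_right, fwdDiff_iter_const_eq_zero 1 _ hn, Pi.zero_apply]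

theorem fwdDiff_iter_succ_gauss_succ (n k : ℕ) :
    Δ_[1] ^[n + 1] (gauss q · (k + 1)) 0 =
      Δ_[1] ^[n] (gauss q · k) 0 + (q ^ (k + 1) - 1) * Δ_[1] ^[n] (gauss q · (k + 1)) 0 := by
  rw [Function.iterate_succ_apply, fwdDiff_gauss_succ, fwdDiff_iter_add, fwdDiff_iter_const_smul]
  rfl

theorem sub_one_pow_mul_Shat_eq_fwdDiff_iter_gauss (n k : ℕ) :
    (q - 1) ^ (n - k) * Shat q n k = Δ_[1] ^[n] (gauss q · k) 0 := by
  induction n generalizing k with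
  | zero => cases k <;> simp [Shat, gauss]
  | succ n ih =>
    cases k with
    | zero => rw [Shat, mul_zero, fwdDiff_iter_gauss_zero_right q n.succ_ne_zero]
    | succ k =>
      rw [fwdDiff_iter_succ_gauss_succ, ← ih, ← ih, Shat, ← sub_one_mul_qint, Nat.succ_sub_succ]
      rcases Nat.lt_or_ge n (k + 1) with h | h
      · simp [Shat_eq_zero_of_lt q h]
      · rw [show n - k = n - (k + 1) + 1 by omega, pow_succ]
        ring

end

theorem stmt_11 {K : Type*} [CommRing K] (q : K) (n k : ℕ) :
    (q - 1) ^ (n - k) * Shat q n k =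
      ∑ j ∈ Finset.Icc k n, (-1 : K) ^ (n - j) * (Nat.choose n j : K) * gauss q j k := by
  rw [sub_one_pow_mul_Shat_eq_fwdDiff_iter_gauss,
    fwdDiff_iter_eq_sum_Icc_of_eq_zero_of_lt fun j ↦ gauss_eq_zero_of_lt q]
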